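/- arXiv:2301.00040 — 2 statements merged into one kernel-verified Lean document; each statement's English description precedes it below -/
import Mathlib

section
/- Three-variable identity: let H be a real Hilbert space, Z a complete subspace, and y, x, w ∈ H with y^{⊥Z}, x^{⊥Z}, w^{⊥Z} nonzero, y^{⊥span(x)+span(w)+Z} ≠ 0, x^{⊥span(w)+Z} ≠ 0, and w^{⊥span(x)+Z} ≠ 0. Then f_{y∼x|span(w)+Z}·√(1 − R²_{y∼w|span(x)+Z}) = f_{y∼x|Z}·√(1 − R²_{x∼w|Z}) − R_{y∼w|span(x)+Z}·R_{x∼w|Z}. -/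
/-!
R²-calculus in real Hilbert spaces (Freidling & Zhao, "Optimization-based
Sensitivity Analysis for Unmeasured Confounding using Partial Correlations").
-/

noncomputable section

open Submodule RealInnerProductSpace

variable {H : Type*} [NormedAddCommGroup H] [InnerProductSpace ℝ H]

/-- The residual `h^{⊥M} = h − P_M h` of `h` after projecting onto `M`. -/
def resid (M : Submodule ℝ H) [HasOrthogonalProjection M] (h : H) : H :=
  h - (orthogonalProjection M h : H)

/-- The marginal R²-value `R²_{y∼X} = 1 − ‖y^{⊥X}‖²/‖y‖²`. -/
def R2 (y : H) (X : Submodule ℝ H) [HasOrthogonalProjection X] : ℝ :=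
  1 - ‖resid X y‖ ^ 2 / ‖y‖ ^ 2

/-- The partial R²-value `R²_{y∼X|Z} = (R²_{y∼X+Z} − R²_{y∼Z})/(1 − R²_{y∼Z})`. -/
def R2p (y : H) (X Z : Submodule ℝ H) [HasOrthogonalProjection (X ⊔ Z)]
    [HasOrthogonalProjection Z] : ℝ :=
  (R2 y (X ⊔ Z) - R2 y Z) / (1 - R2 y Z)

/-- The partial R-value `R_{y∼x|Z} = ⟪y^{⊥Z}, x^{⊥Z}⟫/(‖y^{⊥Z}‖·‖x^{⊥Z}‖)`. -/
def Rp (y x : H) (Z : Submodule ℝ H) [HasOrthogonalProjection Z] : ℝ :=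
  ⟪resid Z y, resid Z x⟫ / (‖resid Z y‖ * ‖resid Z x‖)

/-- The partial f-value `f_{y∼x|Z} = R_{y∼x|Z}/√(1 − R²_{y∼x|Z})`. -/
def fp (y x : H) (Z : Submodule ℝ H) [HasOrthogonalProjection Z] : ℝ :=
  Rp y x Z / Real.sqrt (1 - Rp y x Z ^ 2)

/-- The regression estimand `β_{y∼d|M} = ⟪y^{⊥M}, d^{⊥M}⟫/‖d^{⊥M}‖²`. -/
def betaReg (y d : H) (M : Submodule ℝ H) [HasOrthogonalProjection M] : ℝ :=
  ⟪resid M y, resid M d⟫ / ‖resid M d‖ ^ 2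

/-- `σ_{y∼M} = ‖y^{⊥M}‖`. -/
def sigv (y : H) (M : Submodule ℝ H) [HasOrthogonalProjection M] : ℝ :=
  ‖resid M y‖

/-
Adding `span(w)` to `Z` replaces every residual by its component orthogonal to `w^{⊥Z}`. This gives
the classical recursion `R_{y∼x|span(w)+Z} = (a - b c)/√((1 - b²)(1 - c²))` for
`a = R_{y∼x|Z}`, `b = R_{y∼w|Z}`, `c = R_{x∼w|Z}`, and symmetrically for `R_{y∼w|span(x)+Z}`.
The two values `1 - R²` are then `D/((1 - b²)(1 - c²))` and `D/((1 - a²)(1 - c²))` for the Gram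
determinant `D = 1 - a² - b² - c² + 2abc`, so both sides of the identity reduce to
`(a - b c)/√((1 - a²)(1 - c²))`.
-/

def partialCorr (a b c : ℝ) : ℝ :=
  (a - b * c) / (Real.sqrt (1 - b ^ 2) * Real.sqrt (1 - c ^ 2))

lemma one_sub_partialCorr_sq {a b c : ℝ} (hb : b ^ 2 < 1) (hc : c ^ 2 < 1) :
    1 - partialCorr a b c ^ 2 =
      ((1 - b ^ 2) * (1 - c ^ 2) - (a - b * c) ^ 2) / ((1 - b ^ 2) * (1 - c ^ 2)) := by
  rw [partialCorr, div_pow, mul_pow, Real.sq_sqrt (by linarith), Real.sq_sqrt (by linarith),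
    one_sub_div (mul_pos (by linarith) (by linarith)).ne']

lemma sqrt_one_sub_partialCorr_sq {a b c : ℝ} (hb : b ^ 2 < 1) (hc : c ^ 2 < 1) :
    Real.sqrt (1 - partialCorr a b c ^ 2) =
      Real.sqrt ((1 - b ^ 2) * (1 - c ^ 2) - (a - b * c) ^ 2) /
        (Real.sqrt (1 - b ^ 2) * Real.sqrt (1 - c ^ 2)) := by
  rw [one_sub_partialCorr_sq hb hc, Real.sqrt_div' _ (mul_pos (by linarith) (by linarith)).le,
    Real.sqrt_mul (by linarith)]

theorem partialCorr_div_sqrt_mul_sqrt {a b c : ℝ} (ha : a ^ 2 < 1) (hb : b ^ 2 < 1)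
    (hc : c ^ 2 < 1) (hA : partialCorr a b c ^ 2 < 1) :
    partialCorr a b c / Real.sqrt (1 - partialCorr a b c ^ 2) *
        Real.sqrt (1 - partialCorr b a c ^ 2) =
      a / Real.sqrt (1 - a ^ 2) * Real.sqrt (1 - c ^ 2) - partialCorr b a c * c := by
  have hsa : 0 < Real.sqrt (1 - a ^ 2) := Real.sqrt_pos.2 (by linarith)
  have hsb : 0 < Real.sqrt (1 - b ^ 2) := Real.sqrt_pos.2 (by linarith)
  have hsc : 0 < Real.sqrt (1 - c ^ 2) := Real.sqrt_pos.2 (by linarith)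
  have hD : 0 < (1 - b ^ 2) * (1 - c ^ 2) - (a - b * c) ^ 2 := by
    have h := sub_pos.2 hA
    rwa [one_sub_partialCorr_sq hb hc,
      div_pos_iff_of_pos_right (mul_pos (by linarith) (by linarith))] at h
  have hD_symm : (1 - a ^ 2) * (1 - c ^ 2) - (b - a * c) ^ 2 =
      (1 - b ^ 2) * (1 - c ^ 2) - (a - b * c) ^ 2 := by ring
  have hsD : 0 < Real.sqrt ((1 - b ^ 2) * (1 - c ^ 2) - (a - b * c) ^ 2) := Real.sqrt_pos.2 hD
  rw [sqrt_one_sub_partialCorr_sq hb hc, sqrt_one_sub_partialCorr_sq ha hc, hD_symm]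
  unfold partialCorr
  field_simp
  rw [Real.sq_sqrt (by linarith)]
  ring

section Residuals

variable (Z : Submodule ℝ H) [HasOrthogonalProjection Z]

lemma resid_eq_sub_starProjection (h : H) : resid Z h = h - Z.starProjection h := rfl

lemma resid_mem_orthogonal (h : H) : resid Z h ∈ Zᗮ :=
  sub_starProjection_mem_orthogonal h

lemma resid_eq_zero_iff {h : H} : resid Z h = 0 ↔ h ∈ Z := by
  rw [resid_eq_sub_starProjection, sub_eq_zero, eq_comm]
  exact starProjection_eq_self_iff

lemma inner_resid_left_of_mem_orthogonal (x : H) {r : H} (hr : r ∈ Zᗮ) :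
    ⟪resid Z x, r⟫ = ⟪x, r⟫ := by
  rw [resid_eq_sub_starProjection, inner_sub_left,
    inner_right_of_mem_orthogonal (starProjection_apply_mem Z x) hr, sub_zero]

lemma resid_eq_of_mem_orthogonal {h v : H} (hv : v ∈ Zᗮ) (hhv : h - v ∈ Z) : resid Z h = v := by
  rw [resid_eq_sub_starProjection, eq_starProjection_of_mem_orthogonal hhv (by simpa using hv)]
  abel

lemma resid_sup_span_singleton (x h : H) [HasOrthogonalProjection ((ℝ ∙ x) ⊔ Z)] :
    resid ((ℝ ∙ x) ⊔ Z) h =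
      resid Z h - (⟪resid Z h, resid Z x⟫ / ‖resid Z x‖ ^ 2) • resid Z x := by
  set t := ⟪resid Z h, resid Z x⟫ / ‖resid Z x‖ ^ 2
  have hZ : resid Z h - t • resid Z x ∈ Zᗮ :=
    sub_mem (resid_mem_orthogonal Z h) (smul_mem _ _ (resid_mem_orthogonal Z x))
  apply resid_eq_of_mem_orthogonal
  · rw [← inf_orthogonal]
    refine mem_inf.2 ⟨?_, hZ⟩
    rw [mem_orthogonal_singleton_iff_inner_right, ← inner_resid_left_of_mem_orthogonal Z x hZ,
      inner_sub_right, real_inner_smul_right, real_inner_self_eq_norm_sq, real_inner_comm]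
    rcases eq_or_ne (resid Z x) 0 with h0 | h0
    · simp [h0]
    · rw [div_mul_cancel₀ _ (pow_ne_zero 2 (norm_ne_zero_iff.2 h0)), sub_self]
  · have hx : resid Z x ∈ (ℝ ∙ x) ⊔ Z :=
      sub_mem (mem_sup_left (mem_span_singleton_self x)) (mem_sup_right (coe_mem _))
    have : h - (resid Z h - t • resid Z x) = Z.starProjection h + t • resid Z x := by
      rw [resid_eq_sub_starProjection Z h]
      abel
    rw [this]
    exact add_mem (mem_sup_right (coe_mem _)) (smul_mem _ _ hx)

lemma inner_resid_sup_span_singleton (x : H) [HasOrthogonalProjection ((ℝ ∙ x) ⊔ Z)] {y v : H}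
    (hy : resid Z y ≠ 0) (hv : resid Z v ≠ 0) :
    ⟪resid ((ℝ ∙ x) ⊔ Z) y, resid ((ℝ ∙ x) ⊔ Z) v⟫ =
      ‖resid Z y‖ * ‖resid Z v‖ * (Rp y v Z - Rp y x Z * Rp v x Z) := by
  have hny : ‖resid Z y‖ ≠ 0 := norm_ne_zero_iff.2 hy
  have hnv : ‖resid Z v‖ ≠ 0 := norm_ne_zero_iff.2 hv
  rw [resid_sup_span_singleton, resid_sup_span_singleton]
  rcases eq_or_ne (resid Z x) 0 with hx | hx
  · simp [Rp, hx]
    field_simp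
  · have hnx : ‖resid Z x‖ ≠ 0 := norm_ne_zero_iff.2 hx
    simp only [Rp, inner_sub_left, inner_sub_right, real_inner_smul_left, real_inner_smul_right,
      real_inner_self_eq_norm_sq, real_inner_comm (resid Z x) (resid Z v)]
    field_simp
    ring

lemma Rp_self {y : H} (hy : resid Z y ≠ 0) : Rp y y Z = 1 := by
  have hny : ‖resid Z y‖ ≠ 0 := norm_ne_zero_iff.2 hy
  rw [Rp, real_inner_self_eq_norm_mul_norm, div_self (mul_ne_zero hny hny)]

lemma Rp_comm (x y : H) : Rp y x Z = Rp x y Z := by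
  rw [Rp, Rp, real_inner_comm, mul_comm]

lemma norm_resid_sup_span_singleton (x : H) [HasOrthogonalProjection ((ℝ ∙ x) ⊔ Z)] {y : H}
    (hy : resid Z y ≠ 0) :
    ‖resid ((ℝ ∙ x) ⊔ Z) y‖ = ‖resid Z y‖ * Real.sqrt (1 - Rp y x Z ^ 2) := by
  have h := inner_resid_sup_span_singleton Z x hy hy
  rw [real_inner_self_eq_norm_sq, Rp_self Z hy] at h
  rw [← Real.sqrt_sq (norm_nonneg (resid ((ℝ ∙ x) ⊔ Z) y)), h,
    show ‖resid Z y‖ * ‖resid Z y‖ * (1 - Rp y x Z * Rp y x Z) =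
      ‖resid Z y‖ ^ 2 * (1 - Rp y x Z ^ 2) by ring,
    Real.sqrt_mul (sq_nonneg _), Real.sqrt_sq (norm_nonneg _)]

lemma Rp_sup_span_singleton (x : H) [HasOrthogonalProjection ((ℝ ∙ x) ⊔ Z)] {y v : H}
    (hy : resid Z y ≠ 0) (hv : resid Z v ≠ 0) :
    Rp y v ((ℝ ∙ x) ⊔ Z) = partialCorr (Rp y v Z) (Rp y x Z) (Rp v x Z) := by
  have hnyv : ‖resid Z y‖ * ‖resid Z v‖ ≠ 0 :=
    mul_ne_zero (norm_ne_zero_iff.2 hy) (norm_ne_zero_iff.2 hv)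
  rw [Rp, inner_resid_sup_span_singleton Z x hy hv, norm_resid_sup_span_singleton Z x hy,
    norm_resid_sup_span_singleton Z x hv, partialCorr, mul_mul_mul_comm,
    mul_div_mul_left _ _ hnyv]

lemma sq_Rp_lt_one {x y : H} (hy : y ∉ (ℝ ∙ x) ⊔ Z) : Rp y x Z ^ 2 < 1 := by
  refine (sq_lt_one_iff_abs_lt_one _).2
    (lt_of_le_of_ne (abs_real_inner_div_norm_mul_norm_le_one _ _) ?_)
  intro h
  obtain ⟨-, r, hr, hxy⟩ := (abs_real_inner_div_norm_mul_norm_eq_one_iff _ _).1 h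
  have hyx : resid Z y = r⁻¹ • resid Z x := by rw [hxy, smul_smul, inv_mul_cancel₀ hr, one_smul]
  rw [resid_eq_sub_starProjection, resid_eq_sub_starProjection] at hyx
  have hy_eq : y = r⁻¹ • x + (Z.starProjection y - r⁻¹ • Z.starProjection x) := by
    linear_combination (norm := module) hyx
  apply hy
  rw [hy_eq]
  exact add_mem (mem_sup_left (smul_mem _ _ (mem_span_singleton_self x)))
    (mem_sup_right (sub_mem (starProjection_apply_mem Z y)
      (smul_mem _ _ (starProjection_apply_mem Z x))))

end Residuals

theorem three_variable_identity_general
    (Z : Submodule ℝ H) [CompleteSpace Z] (y x w : H)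
    [CompleteSpace ↥((ℝ ∙ x) ⊔ Z)] [CompleteSpace ↥((ℝ ∙ w) ⊔ Z)]
    [CompleteSpace ↥((ℝ ∙ x) ⊔ (ℝ ∙ w) ⊔ Z)]
    (hy : resid Z y ≠ 0) (hx : resid Z x ≠ 0) (hw : resid Z w ≠ 0)
    (hy3 : resid ((ℝ ∙ x) ⊔ (ℝ ∙ w) ⊔ Z) y ≠ 0)
    (hx2 : resid ((ℝ ∙ w) ⊔ Z) x ≠ 0) :
    fp y x ((ℝ ∙ w) ⊔ Z) * Real.sqrt (1 - Rp y w ((ℝ ∙ x) ⊔ Z) ^ 2) =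
      fp y x Z * Real.sqrt (1 - Rp x w Z ^ 2) - Rp y w ((ℝ ∙ x) ⊔ Z) * Rp x w Z := by
  have hyxw : y ∉ (ℝ ∙ x) ⊔ ((ℝ ∙ w) ⊔ Z) := by
    rwa [← sup_assoc, ← resid_eq_zero_iff]
  have hyx : y ∉ (ℝ ∙ x) ⊔ Z := fun h ↦ hyxw (sup_left_comm (ℝ ∙ w) (ℝ ∙ x) Z ▸ mem_sup_right h)
  have hyw : y ∉ (ℝ ∙ w) ⊔ Z := fun h ↦ hyxw (mem_sup_right h)
  have hxw : x ∉ (ℝ ∙ w) ⊔ Z := by rwa [← resid_eq_zero_iff]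
  have hA := sq_Rp_lt_one ((ℝ ∙ w) ⊔ Z) hyxw
  rw [Rp_sup_span_singleton Z w hy hx] at hA
  rw [fp, fp, Rp_sup_span_singleton Z w hy hx, Rp_sup_span_singleton Z x hy hw, Rp_comm Z x w]
  exact partialCorr_div_sqrt_mul_sqrt (sq_Rp_lt_one Z hyx) (sq_Rp_lt_one Z hyw)
    (sq_Rp_lt_one Z hxw) hA

/-- the three-variable identity. -/
theorem three_variable_identity [CompleteSpace H]
    (Z : Submodule ℝ H) [CompleteSpace Z] (y x w : H)
    [CompleteSpace ↥((ℝ ∙ x) ⊔ Z)] [CompleteSpace ↥((ℝ ∙ w) ⊔ Z)]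
    [CompleteSpace ↥((ℝ ∙ x) ⊔ (ℝ ∙ w) ⊔ Z)]
    (hy : resid Z y ≠ 0) (hx : resid Z x ≠ 0) (hw : resid Z w ≠ 0)
    (hy3 : resid ((ℝ ∙ x) ⊔ (ℝ ∙ w) ⊔ Z) y ≠ 0)
    (hx2 : resid ((ℝ ∙ w) ⊔ Z) x ≠ 0) (hw2 : resid ((ℝ ∙ x) ⊔ Z) w ≠ 0) :
    fp y x ((ℝ ∙ w) ⊔ Z) * Real.sqrt (1 - Rp y w ((ℝ ∙ x) ⊔ Z) ^ 2) =
      fp y x Z * Real.sqrt (1 - Rp x w Z ^ 2) - Rp y w ((ℝ ∙ x) ⊔ Z) * Rp x w Z :=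
  three_variable_identity_general Z y x w hy hx hw hy3 hx2
end
end

section
/- Bias bound under a multi-dimensional unmeasured confounder (Proposition 2): let H be a real Hilbert space, W a complete subspace, U a finite-dimensional subspace, and y, d ∈ H such that d^{⊥W} ≠ 0, d^{⊥W+U} ≠ 0, y^{⊥W+span(d)} ≠ 0, and R²_{d∼U|W} < 1. Then (β_{y∼d|W} − β_{y∼d|W+U})² ≤ R²_{y∼U|W+span(d)}·f²_{d∼U|W}·σ²_{y∼W+span(d)}/σ²_{d∼W}, i.e. |β_{y∼d|W} − β_{y∼d|W+U}| ≤ √(R²_{y∼U|W+span(d)}·f²_{d∼U|W})·σ_{y∼W+span(d)}/σ_{d∼W}. -/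
/-!
R²-calculus in real Hilbert spaces (Freidling & Zhao, "Optimization-based
Sensitivity Analysis for Unmeasured Confounding using Partial Correlations").
-/

noncomputable section

open Submodule RealInnerProductSpace

variable {H : Type*} [NormedAddCommGroup H] [InnerProductSpace ℝ H]

/-- The partial f²-value `f²_{y∼X|M} = R²_{y∼X|M}/(1 − R²_{y∼X|M})`. -/
def f2p (y : H) (X M : Submodule ℝ H) [HasOrthogonalProjection (X ⊔ M)]
    [HasOrthogonalProjection M] : ℝ :=
  R2p y X M / (1 - R2p y X M)

/-!
Write `e = y^{⊥W+span d}` and `g = d^{⊥W} − d^{⊥W+U}`, the part of `d^{⊥W}` explained by `U`.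
By Frisch–Waugh–Lovell, `y^{⊥W} = e + β_{y∼d|W} d^{⊥W}`, and this turns the bias into
`⟪e, g⟫ / ‖d^{⊥W+U}‖²`. As `g ∈ U + W + span d` and `e ⊥ W + span d`, only the part of `e`
explained by `U`, of squared norm `R²_{y∼U|W+span d} ‖e‖²`, pairs with `g`, and only with
`g^{⊥W+span d}`, whose squared norm is `‖g‖² ‖d^{⊥W+U}‖² / ‖d^{⊥W}‖²`. Cauchy–Schwarz and
`f²_{d∼U|W} = ‖g‖² / ‖d^{⊥W+U}‖²` conclude.
-/

section Residual

variable {M N : Submodule ℝ H} [HasOrthogonalProjection M] [HasOrthogonalProjection N]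

theorem resid_eq_starProjection_orthogonal (x : H) : resid M x = Mᗮ.starProjection x := by
  simp [resid]

@[simp]
theorem resid_zero : resid M 0 = 0 := by
  simp [resid]

theorem resid_mem_orthogonal_s11 (x : H) : resid M x ∈ Mᗮ := by
  simp [resid]

theorem sub_resid_mem (x : H) : x - resid M x ∈ M := by
  simp [resid]

theorem resid_sub (x y : H) : resid M (x - y) = resid M x - resid M y := by
  simp only [resid_eq_starProjection_orthogonal, map_sub]

theorem resid_eq_of_mem_orthogonal_s11 {x v : H} (hv : v ∈ Mᗮ) (hxv : x - v ∈ M) :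
    resid M x = v := by
  rw [resid_eq_starProjection_orthogonal]
  exact eq_starProjection_of_mem_orthogonal hv (M.le_orthogonal_orthogonal hxv)

theorem inner_resid_right_eq (x y : H) : ⟪x, resid M y⟫ = ⟪resid M x, resid M y⟫ := by
  have h : ⟪x - resid M x, resid M y⟫ = 0 := resid_mem_orthogonal_s11 y _ (sub_resid_mem x)
  rwa [inner_sub_left, sub_eq_zero] at h

theorem resid_congr (h : M = N) (x : H) : resid M x = resid N x := by
  subst h; rfl

variable (h : M ≤ N)
include h

theorem resid_sub_resid_mem (x : H) : resid M x - resid N x ∈ N := by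
  simpa using N.sub_mem (sub_resid_mem x) (h (sub_resid_mem (M := M) x))

theorem resid_resid_of_le (x : H) : resid N (resid M x) = resid N x :=
  resid_eq_of_mem_orthogonal_s11 (resid_mem_orthogonal_s11 x) (resid_sub_resid_mem h x)

theorem resid_resid_of_ge (x : H) : resid M (resid N x) = resid N x :=
  resid_eq_of_mem_orthogonal_s11 (orthogonal_le h (resid_mem_orthogonal_s11 x)) (by simp)

theorem resid_ne_zero_of_le {x : H} (hx : resid N x ≠ 0) : resid M x ≠ 0 := by
  intro h0
  rw [← resid_resid_of_le h, h0, resid_zero] at hx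
  exact hx rfl

theorem inner_resid_resid_of_le (x : H) : ⟪resid M x, resid N x⟫ = ‖resid N x‖ ^ 2 := by
  rw [← real_inner_self_eq_norm_sq, ← sub_eq_zero, ← inner_sub_left]
  exact resid_mem_orthogonal_s11 x _ (resid_sub_resid_mem h x)

theorem norm_sq_resid_sub_resid_of_le (x : H) :
    ‖resid M x - resid N x‖ ^ 2 = ‖resid M x‖ ^ 2 - ‖resid N x‖ ^ 2 := by
  rw [norm_sub_sq_real, inner_resid_resid_of_le h]
  ring

end Residual

section SpanSingleton

variable (W : Submodule ℝ H) [HasOrthogonalProjection W] (d : H)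

theorem resid_mem_sup_span_singleton : resid W d ∈ W ⊔ (ℝ ∙ d) := by
  simpa using (W ⊔ (ℝ ∙ d)).sub_mem (mem_sup_right (mem_span_singleton_self d))
    (mem_sup_left (sub_resid_mem (M := W) d))

variable [HasOrthogonalProjection (W ⊔ (ℝ ∙ d))]

/-- Frisch–Waugh–Lovell. -/
theorem resid_sup_span_singleton_s11 (x : H) :
    resid (W ⊔ (ℝ ∙ d)) x = resid W x - betaReg x d W • resid W d := by
  apply resid_eq_of_mem_orthogonal_s11
  · rw [← inf_orthogonal, mem_inf]
    refine ⟨sub_mem (resid_mem_orthogonal_s11 x) (smul_mem _ _ (resid_mem_orthogonal_s11 d)), ?_⟩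
    rw [mem_orthogonal_singleton_iff_inner_right, inner_sub_right, inner_smul_right,
      inner_resid_right_eq, inner_resid_right_eq d d, real_inner_self_eq_norm_sq, betaReg,
      real_inner_comm]
    rcases eq_or_ne (resid W d) 0 with h0 | h0
    · simp [h0]
    · field_simp
      ring
  · rw [sub_sub_eq_add_sub, add_sub_right_comm]
    exact add_mem (mem_sup_left (sub_resid_mem x))
      (smul_mem _ _ (resid_mem_sup_span_singleton W d))

theorem norm_sq_resid_sup_span_singleton (x : H) :
    ‖resid (W ⊔ (ℝ ∙ d)) x‖ ^ 2 =
      ‖resid W x‖ ^ 2 - ⟪resid W x, resid W d⟫ ^ 2 / ‖resid W d‖ ^ 2 := by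
  have h := norm_sq_resid_sub_resid_of_le (le_sup_left : W ≤ W ⊔ (ℝ ∙ d)) x
  have hdiff : resid W x - resid (W ⊔ (ℝ ∙ d)) x = betaReg x d W • resid W d := by
    rw [resid_sup_span_singleton_s11, sub_sub_cancel]
  rw [hdiff, norm_smul, mul_pow, Real.norm_eq_abs, sq_abs, betaReg] at h
  rcases eq_or_ne (resid W d) 0 with h0 | h0
  · simp only [h0, norm_zero, inner_zero_right] at h ⊢
    linarith
  · field_simp at h ⊢
    linarith

end SpanSingleton

section Regression

variable {M N : Submodule ℝ H} [HasOrthogonalProjection M] [HasOrthogonalProjection N]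
  {d : H} [HasOrthogonalProjection (M ⊔ (ℝ ∙ d))] (h : M ≤ N)
include h

theorem betaReg_sub_betaReg_of_le (hN : resid N d ≠ 0) (y : H) :
    betaReg y d M - betaReg y d N =
      ⟪resid (M ⊔ (ℝ ∙ d)) y, resid M d - resid N d⟫ / ‖resid N d‖ ^ 2 := by
  have hyM : resid M y = resid (M ⊔ (ℝ ∙ d)) y + betaReg y d M • resid M d := by
    rw [resid_sup_span_singleton_s11]
    abel
  have hnum : ⟪resid N y, resid N d⟫ =
      ⟪resid (M ⊔ (ℝ ∙ d)) y, resid N d⟫ + betaReg y d M * ‖resid N d‖ ^ 2 := by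
    rw [← resid_resid_of_le h y, ← inner_resid_right_eq, hyM, inner_add_left, inner_smul_left,
      inner_resid_resid_of_le h]
    rfl
  have he : ⟪resid (M ⊔ (ℝ ∙ d)) y, resid M d⟫ = 0 := by
    rw [real_inner_comm]
    exact resid_mem_orthogonal_s11 y _ (resid_mem_sup_span_singleton M d)
  rw [show betaReg y d N = ⟪resid N y, resid N d⟫ / ‖resid N d‖ ^ 2 from rfl, hnum,
    inner_sub_right, he]
  field_simp
  ring

theorem norm_sq_resid_sup_span_singleton_resid_sub_resid (hM : resid M d ≠ 0) :
    ‖resid (M ⊔ (ℝ ∙ d)) (resid M d - resid N d)‖ ^ 2 =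
      (‖resid M d‖ ^ 2 - ‖resid N d‖ ^ 2) * ‖resid N d‖ ^ 2 / ‖resid M d‖ ^ 2 := by
  rw [norm_sq_resid_sup_span_singleton, resid_sub, resid_resid_of_ge le_rfl,
    resid_resid_of_ge h, norm_sq_resid_sub_resid_of_le h, inner_sub_left,
    real_inner_self_eq_norm_sq, real_inner_comm, inner_resid_resid_of_le h]
  field_simp
  ring

end Regression

section PartialR2

variable (y : H) {X Z : Submodule ℝ H} [HasOrthogonalProjection Z]
  [HasOrthogonalProjection (X ⊔ Z)]

theorem R2p_eq :
    R2p y X Z = (‖resid Z y‖ ^ 2 - ‖resid (X ⊔ Z) y‖ ^ 2) / ‖resid Z y‖ ^ 2 := by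
  rcases eq_or_ne y 0 with rfl | hy
  · simp [R2p, R2]
  · have hy2 : ‖y‖ ^ 2 ≠ 0 := by positivity
    rw [R2p, R2, R2, sub_sub_sub_cancel_left, sub_sub_cancel, ← sub_div,
      div_div_div_cancel_right₀ hy2]

theorem R2p_mul_sq_norm_resid :
    R2p y X Z * ‖resid Z y‖ ^ 2 = ‖resid Z y‖ ^ 2 - ‖resid (X ⊔ Z) y‖ ^ 2 := by
  rw [R2p_eq]
  rcases eq_or_ne (resid Z y) 0 with h0 | h0
  · rw [← resid_resid_of_le (le_sup_right : Z ≤ X ⊔ Z) y, h0]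
    simp
  · field_simp

theorem f2p_eq {y : H} (hy : resid (X ⊔ Z) y ≠ 0) :
    f2p y X Z = (‖resid Z y‖ ^ 2 - ‖resid (X ⊔ Z) y‖ ^ 2) / ‖resid (X ⊔ Z) y‖ ^ 2 := by
  have hZ := resid_ne_zero_of_le (le_sup_right : Z ≤ X ⊔ Z) hy
  rw [f2p, R2p_eq]
  field_simp
  ring

theorem sq_inner_resid_le {g : H} (hg : g ∈ X ⊔ Z) :
    ⟪resid Z y, g⟫ ^ 2 ≤ (‖resid Z y‖ ^ 2 - ‖resid (X ⊔ Z) y‖ ^ 2) * ‖resid Z g‖ ^ 2 := by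
  have hle : Z ≤ X ⊔ Z := le_sup_right
  have hgZ : resid Z g ∈ X ⊔ Z := by
    simpa using (X ⊔ Z).sub_mem hg (hle (sub_resid_mem g))
  have hXZ : ⟪resid (X ⊔ Z) y, resid Z g⟫ = 0 := by
    rw [real_inner_comm]
    exact resid_mem_orthogonal_s11 y _ hgZ
  have h : ⟪resid Z y, g⟫ = ⟪resid Z y - resid (X ⊔ Z) y, resid Z g⟫ := by
    rw [inner_sub_left, hXZ, sub_zero, real_inner_comm, inner_resid_right_eq, real_inner_comm]
  rw [h, ← norm_sq_resid_sub_resid_of_le hle, ← mul_pow]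
  exact sq_le_sq' (neg_le_of_abs_le (abs_real_inner_le_norm _ _)) (real_inner_le_norm _ _)

end PartialR2

theorem ols_bias_bound_multi_confounder_general
    (W U : Submodule ℝ H) [CompleteSpace W] (y d : H)
    [CompleteSpace ↥(W ⊔ U)] [CompleteSpace ↥(W ⊔ (ℝ ∙ d))]
    [CompleteSpace ↥(U ⊔ (W ⊔ (ℝ ∙ d)))] [CompleteSpace ↥(U ⊔ W)]
    (hd2 : resid (W ⊔ U) d ≠ 0) :
    (betaReg y d W - betaReg y d (W ⊔ U)) ^ 2 ≤
      R2p y U (W ⊔ (ℝ ∙ d)) * f2p d U W * (sigv y (W ⊔ (ℝ ∙ d)) ^ 2 / sigv d W ^ 2) := by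
  have hle : W ≤ W ⊔ U := le_sup_left
  have hdW : resid W d ≠ 0 := resid_ne_zero_of_le hle hd2
  have hgap : resid W d - resid (W ⊔ U) d ∈ U ⊔ (W ⊔ (ℝ ∙ d)) :=
    (sup_le (le_sup_left.trans le_sup_right) le_sup_left : W ⊔ U ≤ _) (resid_sub_resid_mem hle d)
  have hCS := sq_inner_resid_le y hgap
  rw [norm_sq_resid_sup_span_singleton_resid_sub_resid hle hdW] at hCS
  have hR2 := R2p_mul_sq_norm_resid y (X := U) (Z := W ⊔ (ℝ ∙ d))
  have hdW' : ‖resid W d‖ ≠ 0 := norm_ne_zero_iff.2 hdW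
  have hdQ : ‖resid (W ⊔ U) d‖ ≠ 0 := norm_ne_zero_iff.2 hd2
  rw [betaReg_sub_betaReg_of_le hle hd2, f2p_eq (resid_congr (sup_comm U W) d ▸ hd2),
    resid_congr (sup_comm U W), sigv, sigv, div_pow, div_le_iff₀ (by positivity)]
  refine hCS.trans (le_of_eq ?_)
  rw [← hR2]
  field_simp

/-- bias bound under a multi-dimensional unmeasured confounder
(Proposition 2). -/
theorem ols_bias_bound_multi_confounder [CompleteSpace H]
    (W U : Submodule ℝ H) [CompleteSpace W] [FiniteDimensional ℝ U] (y d : H)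
    [CompleteSpace ↥(W ⊔ U)] [CompleteSpace ↥(W ⊔ (ℝ ∙ d))]
    [CompleteSpace ↥(U ⊔ (W ⊔ (ℝ ∙ d)))] [CompleteSpace ↥(U ⊔ W)]
    (hd : resid W d ≠ 0) (hd2 : resid (W ⊔ U) d ≠ 0)
    (hy : resid (W ⊔ (ℝ ∙ d)) y ≠ 0) (hR : R2p d U W < 1) :
    (betaReg y d W - betaReg y d (W ⊔ U)) ^ 2 ≤
      R2p y U (W ⊔ (ℝ ∙ d)) * f2p d U W * (sigv y (W ⊔ (ℝ ∙ d)) ^ 2 / sigv d W ^ 2) :=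
  ols_bias_bound_multi_confounder_general W U y d hd2
end
end
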